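/- Let F have characteristic 2 and A a Vidinli algebra over F with dim A ≥ 3 and norm q. Then q(x, 1) = 0 for every x ∈ A, where q(x,y) is the polar form of q; in particular x² = q(x)·1 for all x ∈ A. -/

import Mathlib

/-!
Polarizing the conic identity gives `xy + yx = q(x,1) y + q(y,1) x - q(x,y) 1`. In characteristic
`2` the left side is the commutator `xy - yx`, a multiple of `1`, so `q(x,1) y ∈ span {1, x}` for
every `y`. If `q(x,1) ≠ 0` this makes `A = span {1, x}` of dimension at most `2`. Once `q(x,1) = 0`,
the conic identity reads `x² = -q(x) 1 = q(x) 1`.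
-/

open QuadraticMap Submodule

theorem rank_le_two_of_span_pair_eq_top {F M : Type*} [Field F] [AddCommGroup M] [Module F M]
    {a b : M} (hspan : span F {a, b} = ⊤) : Module.rank F M ≤ 2 :=
  calc Module.rank F M = Module.rank F (span F ({a, b} : Set M)) := by rw [hspan, rank_top]
    _ ≤ Cardinal.mk ({a, b} : Set M) := rank_span_le _
    _ ≤ 2 := by
      refine Cardinal.mk_insert_le.trans ?_
      rw [Cardinal.mk_singleton]
      norm_num

theorem neg_eq_self_of_two_eq_zero {F M : Type*} [Ring F] [AddCommGroup M] [Module F M]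
    (hchar : (2 : F) = 0) (a : M) : -a = a := by
  have h : a + a = 0 := by rw [← two_smul F a, hchar, zero_smul]
  exact neg_eq_of_add_eq_zero_right h

section Conic

variable {F A : Type*} [CommRing F] [NonAssocRing A] [Module F A] (q : QuadraticForm F A)

theorem mul_add_mul_swap_of_conic
    (hconic : ∀ x : A, x * x - polar q x 1 • x + q x • (1 : A) = 0) (x y : A) :
    x * y + y * x = polar q x 1 • y + polar q y 1 • x - polar q x y • (1 : A) := by
  have hxy := hconic (x + y)
  rw [add_mul, mul_add, mul_add, polar_add_left, QuadraticMap.map_add q x y] at hxy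
  linear_combination (norm := module) hxy - hconic x - hconic y

theorem polar_one_smul_mem_span_of_commutator (hchar : (2 : F) = 0)
    (hconic : ∀ x : A, x * x - polar q x 1 • x + q x • (1 : A) = 0)
    (hvid : ∀ x y : A, ∃ c : F, x * y - y * x = c • (1 : A)) (x y : A) :
    polar q x 1 • y ∈ span F {1, x} := by
  obtain ⟨c, hc⟩ := hvid x y
  have hy : polar q x 1 • y = (c + polar q x y) • (1 : A) - polar q y 1 • x := by
    have hsym := mul_add_mul_swap_of_conic q hconic x y
    rw [← neg_eq_self_of_two_eq_zero hchar (y * x), ← sub_eq_add_neg, hc] at hsym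
    linear_combination (norm := module) -hsym
  rw [hy]
  exact sub_mem (smul_mem _ _ (subset_span (by simp))) (smul_mem _ _ (subset_span (by simp)))

end Conic

theorem stmt15 {F A : Type*} [Field F] [NonAssocRing A] [Module F A]
    (hchar : (2 : F) = 0) (q : QuadraticForm F A)
    (hconic : ∀ x : A, x * x - QuadraticMap.polar q x 1 • x + q x • (1 : A) = 0)
    (hvid : ∀ x y : A, ∃ c : F, x * y - y * x = c • (1 : A))
    (hdim : 3 ≤ Module.rank F A) :
    ∀ x : A, QuadraticMap.polar q x 1 = 0 ∧ x * x = q x • (1 : A) := by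
  have htrace : ∀ x : A, polar q x 1 = 0 := by
    intro x
    by_contra hx
    have hspan : span F {1, x} = ⊤ := eq_top_iff.mpr fun y _ => by
      simpa [smul_smul, inv_mul_cancel₀ hx] using
        smul_mem _ (polar q x 1)⁻¹ (polar_one_smul_mem_span_of_commutator q hchar hconic hvid x y)
    have : (3 : Cardinal) ≤ 2 := hdim.trans (rank_le_two_of_span_pair_eq_top hspan)
    norm_num at this
  intro x
  refine ⟨htrace x, ?_⟩
  have hx := hconic x
  rw [htrace x, zero_smul, sub_zero, ← sub_neg_eq_add, neg_eq_self_of_two_eq_zero hchar,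
    sub_eq_zero] at hx
  exact hx
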